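/- arXiv:1910.08793 — 2 statements merged into one kernel-verified Lean document; each statement's English description precedes it below -/
import Mathlib

section
/- No Suslin line is 3-entangled. -/
noncomputable def omega1 : Ordinal.{0} := (Cardinal.aleph 1).ord

/-- A linear order has the countable chain condition if there is no uncountable
family of pairwise disjoint nonempty open intervals. -/
def CCC (L : Type*) [LinearOrder L] : Prop :=
  ¬ ∃ I : Set (L × L), ¬ I.Countable ∧
    (∀ p ∈ I, ∃ c, p.1 < c ∧ c < p.2) ∧
    (∀ p ∈ I, ∀ r ∈ I, p ≠ r →
      ¬ ∃ c, (p.1 < c ∧ c < p.2) ∧ (r.1 < c ∧ c < r.2))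

/-- Separability: a countable set meeting every nonempty open interval. -/
def SeparableOrder (L : Type*) [LinearOrder L] : Prop :=
  ∃ D : Set L, D.Countable ∧ ∀ a b : L, a < b → (∃ c, a < c ∧ c < b) →
    ∃ d ∈ D, a < d ∧ d < b

/-- The first `n` coordinates of `t` form an increasing tuple. -/
def IncreasingTuple {L : Type*} [LinearOrder L] (n : ℕ) (t : ℕ → L) : Prop :=
  ∀ i j : ℕ, i < j → j < n → t i < t j

/-- The `n`-tuples of the sequence `a` (indexed by ordinals `< ω₁`) are pairwise
disjoint: no coordinate of one tuple equals any coordinate of another. -/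
def DisjointSeq {L : Type*} [LinearOrder L] (n : ℕ) (a : Ordinal → ℕ → L) : Prop :=
  ∀ ξ, ξ < omega1 → ∀ δ, δ < omega1 → ξ ≠ δ →
    ∀ i, i < n → ∀ j, j < n → a ξ i ≠ a δ j

/-- The sequence of `n`-tuples `a` realizes the type `g`. -/
def RealizesType {L : Type*} [LinearOrder L] (n : ℕ) (a : Ordinal → ℕ → L)
    (g : ℕ → Bool) : Prop :=
  ∃ ξ, ξ < omega1 ∧ ∃ δ, δ < omega1 ∧ ∀ i, i < n → (a ξ i < a δ i ↔ g i = true)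

/-- `L` is `n`-entangled. -/
def Entangled (L : Type*) [LinearOrder L] (n : ℕ) : Prop :=
  ∀ a : Ordinal → ℕ → L, (∀ ξ, ξ < omega1 → IncreasingTuple n (a ξ)) →
    DisjointSeq n a → ∀ g : ℕ → Bool, RealizesType n a g

/-- The sequence of increasing `n`-tuples is separated: there are
`c 0, …, c (n-2)` with `a ξ i < c i < a ξ (i+1)` for all `ξ < ω₁`. -/
def SeparatedSeq {L : Type*} [LinearOrder L] (n : ℕ) (a : Ordinal → ℕ → L) : Prop :=
  ∃ c : ℕ → L, ∀ ξ, ξ < omega1 → ∀ i, i + 1 < n →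
    a ξ i < c i ∧ c i < a ξ (i + 1)

/-- `L` is weakly `n`-entangled. -/
def WeaklyEntangled (L : Type*) [LinearOrder L] (n : ℕ) : Prop :=
  ∀ a : Ordinal → ℕ → L, (∀ ξ, ξ < omega1 → IncreasingTuple n (a ξ)) →
    DisjointSeq n a → SeparatedSeq n a → ∀ g : ℕ → Bool, RealizesType n a g

/-!
A c.c.c. linear order has only countably many isolated points, since the open intervals
witnessing isolation are pairwise disjoint. If it is moreover not separable, every countable
set `D` misses a nonempty open interval free of isolated points; such an interval contains
three points `x < y < z`, an increasing triple whose hull `[x, z]` misses `D`.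
Choosing such triples by recursion along `ω₁`, each hull missing all coordinates of the
earlier triples, gives a disjoint sequence that does not realize the type `(1, 0, 1)`:
two triples `s`, `t` of that type have interleaved hulls `s 0 < t 0 < s 2 < t 2`, so the
later hull contains a coordinate of the earlier triple.
-/

open Set

noncomputable def greedySeq {α T : Type*} [Nonempty T] (S : T → Set α)
    (P : Set α → T → Prop) (ξ : Ordinal.{0}) : T :=
  Classical.epsilon (P (⋃ η < ξ, S (greedySeq S P η)))
termination_by ξ

theorem countable_Iio_of_lt_omega1 {ξ : Ordinal.{0}} (hξ : ξ < omega1) : (Iio ξ).Countable := by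
  rw [← Cardinal.le_aleph0_iff_set_countable, Cardinal.mk_Iio_ordinal, Cardinal.lift_le_aleph0,
    ← Order.lt_succ_iff, Cardinal.succ_aleph0, ← Cardinal.lt_ord]
  exact hξ

theorem exists_omega1_seq {α T : Type*} (S : T → Set α) (hS : ∀ t, (S t).Countable)
    {P : Set α → T → Prop} (hP : ∀ D : Set α, D.Countable → ∃ t, P D t) :
    ∃ f : Ordinal.{0} → T, ∀ ξ < omega1, P (⋃ η < ξ, S (f η)) (f ξ) := by
  have : Nonempty T := let ⟨t, _⟩ := hP ∅ countable_empty; ⟨t⟩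
  refine ⟨greedySeq S P, fun ξ hξ => ?_⟩
  rw [greedySeq]
  exact Classical.epsilon_spec
    (hP _ ((countable_Iio_of_lt_omega1 hξ).biUnion fun η _ => hS (greedySeq S P η)))

section LinearOrder

variable {L : Type*} [LinearOrder L]

def IsIsolated (p : L) : Prop := ∃ u v, Ioo u v = {p}

theorem CCC.countable_setOf_isIsolated (hccc : CCC L) :
    {p : L | IsIsolated p}.Countable := by
  choose! u v huv using fun (p : L) (hp : IsIsolated p) => hp
  have mem : ∀ p, IsIsolated p → p ∈ Ioo (u p) (v p) := fun p hp => by rw [huv p hp]; rfl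
  have uniq : ∀ p, IsIsolated p → ∀ c ∈ Ioo (u p) (v p), c = p := fun p hp c hc =>
    (eq_singleton_iff_unique_mem.1 (huv p hp)).2 c hc
  refine countable_of_injective_of_countable_image (f := fun p => (u p, v p)) ?_ ?_
  · intro p hp q hq hpq
    simp only [Prod.mk.injEq] at hpq
    exact (uniq p hp q (hpq.1 ▸ hpq.2 ▸ mem q hq)).symm
  · by_contra hI
    refine hccc ⟨_, hI, ?_, ?_⟩
    · rintro _ ⟨p, hp, rfl⟩
      exact ⟨p, mem p hp⟩
    · rintro _ ⟨p, hp, rfl⟩ _ ⟨q, hq, rfl⟩ hne ⟨c, hcp, hcq⟩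
      exact hne (by rw [← uniq p hp c hcp, uniq q hq c hcq])

theorem exists_Ioo_disjoint_of_not_separableOrder (hsep : ¬ SeparableOrder L) {D : Set L}
    (hD : D.Countable) : ∃ u v, (Ioo u v).Nonempty ∧ Disjoint (Ioo u v) D := by
  by_contra h
  push Not at h
  refine hsep ⟨D, hD, fun a b _ hab => ?_⟩
  obtain ⟨d, hd, hdD⟩ := not_disjoint_iff.1 (h a b hab)
  exact ⟨d, hdD, hd⟩

theorem exists_ne_mem_Ioo_of_not_isIsolated {p u v : L} (hp : p ∈ Ioo u v)
    (hiso : ¬ IsIsolated p) : ∃ c ∈ Ioo u v, c ≠ p := by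
  by_contra h
  push Not at h
  exact hiso ⟨u, v, eq_singleton_iff_unique_mem.2 ⟨hp, h⟩⟩

theorem exists_three_lt_of_not_isIsolated {u v : L} (hne : (Ioo u v).Nonempty)
    (hiso : ∀ p ∈ Ioo u v, ¬ IsIsolated p) :
    ∃ x y z, u < x ∧ x < y ∧ y < z ∧ z < v := by
  obtain ⟨w, hw⟩ := hne
  obtain ⟨c, hc, hcw⟩ := exists_ne_mem_Ioo_of_not_isIsolated hw (hiso w hw)
  have hlt : min w c < max w c := min_lt_max.2 hcw.symm
  have hmin : min w c ∈ Ioo u (max w c) := ⟨lt_min hw.1 hc.1, hlt⟩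
  obtain ⟨r, hr, hrm⟩ := exists_ne_mem_Ioo_of_not_isIsolated hmin
    (hiso _ ⟨lt_min hw.1 hc.1, min_lt_of_left_lt hw.2⟩)
  exact ⟨min r (min w c), max r (min w c), max w c, lt_min hr.1 hmin.1, min_lt_max.2 hrm,
    max_lt hr.2 hlt, max_lt hw.2 hc.2⟩

def triple (x y z : L) : ℕ → L
  | 0 => x
  | 1 => y
  | _ => z

theorem increasingTuple_triple {x y z : L} (hxy : x < y) (hyz : y < z) :
    IncreasingTuple 3 (triple x y z) := by
  intro i j hij hj
  interval_cases j <;> interval_cases i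
  exacts [hxy, hxy.trans hyz, hyz]

def IsFreshTriple (D : Set L) (t : ℕ → L) : Prop :=
  IncreasingTuple 3 t ∧ Disjoint (Icc (t 0) (t 2)) D

theorem exists_isFreshTriple (hccc : CCC L) (hsep : ¬ SeparableOrder L) {D : Set L}
    (hD : D.Countable) : ∃ t, IsFreshTriple D t := by
  obtain ⟨u, v, hne, hdisj⟩ := exists_Ioo_disjoint_of_not_separableOrder hsep
    (hD.union hccc.countable_setOf_isIsolated)
  obtain ⟨x, y, z, hux, hxy, hyz, hzv⟩ := exists_three_lt_of_not_isIsolated hne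
    fun p hp hiso => disjoint_left.1 hdisj hp (Or.inr hiso)
  refine ⟨triple x y z, increasingTuple_triple hxy hyz, ?_⟩
  exact (hdisj.mono_left (Icc_subset_Ioo hux hzv)).mono_right subset_union_left

theorem IncreasingTuple.mem_Icc {t : ℕ → L} (ht : IncreasingTuple 3 t) {i : ℕ} (hi : i < 3) :
    t i ∈ Icc (t 0) (t 2) := by
  have h01 := ht 0 1 (by norm_num) (by norm_num)
  have h12 := ht 1 2 (by norm_num) (by norm_num)
  interval_cases i
  exacts [⟨le_rfl, (h01.trans h12).le⟩, ⟨h01.le, h12.le⟩, ⟨(h01.trans h12).le, le_rfl⟩]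

theorem IncreasingTuple.zero_lt_two_of_one_lt {s t : ℕ → L} (hs : IncreasingTuple 3 s)
    (ht : IncreasingTuple 3 t) (h1 : t 1 < s 1) : t 0 < s 2 := by
  by_contra! h
  exact lt_asymm h1 (((hs 1 2 (by norm_num) (by norm_num)).trans_le h).trans
    (ht 0 1 (by norm_num) (by norm_num)))

section FreshSeq

variable {a : Ordinal.{0} → ℕ → L}
  (ha : ∀ ξ < omega1, IsFreshTriple (⋃ η < ξ, {a η 0, a η 1, a η 2}) (a ξ))
include ha

theorem notMem_Icc_of_isFreshTriple {η ξ : Ordinal.{0}} (hηξ : η < ξ) (hξ : ξ < omega1)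
    {i : ℕ} (hi : i < 3) : a η i ∉ Icc (a ξ 0) (a ξ 2) := by
  refine disjoint_right.1 (ha ξ hξ).2 (mem_biUnion hηξ ?_)
  interval_cases i <;> simp

theorem disjointSeq_of_isFreshTriple : DisjointSeq 3 a := by
  intro ξ hξ δ hδ hne i hi j hj heq
  rcases hne.lt_or_gt with h | h
  · exact notMem_Icc_of_isFreshTriple ha h hδ hi (heq ▸ (ha δ hδ).1.mem_Icc hj)
  · exact notMem_Icc_of_isFreshTriple ha h hξ hj (heq ▸ (ha ξ hξ).1.mem_Icc hi)

theorem not_realizesType_of_isFreshTriple : ¬ RealizesType 3 a (fun i => decide (i ≠ 1)) := by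
  rintro ⟨ξ, hξ, δ, hδ, hreal⟩
  have h0 : a ξ 0 < a δ 0 := (hreal 0 (by norm_num)).2 rfl
  have h2 : a ξ 2 < a δ 2 := (hreal 2 (by norm_num)).2 rfl
  have hne : ξ ≠ δ := by rintro rfl; exact lt_irrefl _ h0
  have h1 : a δ 1 < a ξ 1 :=
    lt_of_le_of_ne (not_lt.1 fun h => by simpa using (hreal 1 (by norm_num)).1 h)
      (disjointSeq_of_isFreshTriple ha δ hδ ξ hξ hne.symm 1 (by norm_num) 1 (by norm_num))
  have hmid := (ha ξ hξ).1.zero_lt_two_of_one_lt (ha δ hδ).1 h1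
  rcases hne.lt_or_gt with h | h
  · exact notMem_Icc_of_isFreshTriple ha h hδ (i := 2) (by norm_num) ⟨hmid.le, h2.le⟩
  · exact notMem_Icc_of_isFreshTriple ha h hξ (i := 0) (by norm_num) ⟨h0.le, hmid.le⟩

end FreshSeq

end LinearOrder

/-- no Suslin line (c.c.c. non-separable linear order) is 3-entangled. -/
theorem stmt2 (L : Type*) [LinearOrder L]
    (hccc : CCC L) (hsep : ¬ SeparableOrder L) : ¬ Entangled L 3 := by
  intro hent
  obtain ⟨a, ha⟩ := exists_omega1_seq (fun t : ℕ → L => ({t 0, t 1, t 2} : Set L))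
    (fun _ => (toFinite _).countable) fun _ hD => exists_isFreshTriple hccc hsep hD
  exact not_realizesType_of_isFreshTriple ha
    (hent a (fun ξ hξ => (ha ξ hξ).1) (disjointSeq_of_isFreshTriple ha) _)
end

section
/- For every n with 2 ≤ n < ω, a dense separable linear order is n-entangled if and only if it is weakly n-entangled. -/
/-!
Entanglement trivially implies weak entanglement. Conversely, in a dense separable order each
increasing tuple is separated by points of a fixed countable set `D`, so the separators form a
countable colouring of `ω₁`. Some colour class is uncountable; an `ω₁`-subsequence inside it
is separated, hence realizes every type by weak entanglement, and these realizations are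
realizations of the original sequence.
-/

open Cardinal Set

theorem mk_Iio_omega1 : #(Iio omega1) = ℵ₁ := by
  rw [mk_Iio_ordinal, omega1, card_ord, lift_aleph, Ordinal.lift_one]

theorem not_countable_Iio_omega1 : ¬ (Iio omega1).Countable := by
  rw [← le_aleph0_iff_set_countable, mk_Iio_omega1, not_le]
  exact aleph0_lt_aleph_one

theorem exists_mapsTo_injOn_of_mk_le {α : Type*} {s t : Set α} (h : #s ≤ #t) :
    ∃ f : α → α, MapsTo f s t ∧ InjOn f s := by
  classical
  obtain ⟨e⟩ := h
  refine ⟨fun x => if hx : x ∈ s then e ⟨x, hx⟩ else x, fun x hx => ?_,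
    fun x hx y hy hxy => ?_⟩
  · simp only [dif_pos hx, Subtype.coe_prop]
  · simp only [dif_pos hx, dif_pos hy] at hxy
    simpa using e.injective (Subtype.ext hxy)

theorem exists_injOn_Iio_omega1_of_countable {β : Type*} [Countable β]
    {P : Ordinal → β → Prop} (hP : ∀ ξ < omega1, ∃ y, P ξ y) :
    ∃ y, ∃ E : Ordinal → Ordinal,
      MapsTo E (Iio omega1) (Iio omega1) ∧ InjOn E (Iio omega1) ∧
        ∀ ξ < omega1, P (E ξ) y := by
  choose F hF using hP
  obtain ⟨y, hy⟩ : ∃ y, ¬ {ξ | ∃ h : ξ < omega1, F ξ h = y}.Countable := by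
    by_contra! h
    refine not_countable_Iio_omega1 ((countable_iUnion h).mono fun ξ (hξ : ξ < omega1) => ?_)
    exact mem_iUnion_of_mem (F ξ hξ) ⟨hξ, rfl⟩
  have hmk : #(Iio omega1) ≤ #{ξ | ∃ h : ξ < omega1, F ξ h = y} := by
    rw [mk_Iio_omega1, aleph_one_le_iff, ← not_le, le_aleph0_iff_set_countable]
    exact hy
  obtain ⟨E, hmaps, hinj⟩ := exists_mapsTo_injOn_of_mk_le hmk
  refine ⟨y, E, fun ξ hξ => (hmaps hξ).1, hinj, fun ξ hξ => ?_⟩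
  obtain ⟨h, hFy⟩ := hmaps hξ
  exact hFy ▸ hF _ h

theorem SeparableOrder.exists_countable_forall_between {L : Type*} [LinearOrder L]
    [DenselyOrdered L] (hL : SeparableOrder L) :
    ∃ D : Set L, D.Countable ∧ ∀ a b : L, a < b → ∃ d ∈ D, a < d ∧ d < b := by
  obtain ⟨D, hDc, hD⟩ := hL
  exact ⟨D, hDc, fun a b hab => hD a b hab (exists_between hab)⟩

section Reindex

variable {L : Type*} [LinearOrder L] {n : ℕ} {a : Ordinal → ℕ → L} {E : Ordinal → Ordinal}

theorem DisjointSeq.comp (hmaps : MapsTo E (Iio omega1) (Iio omega1))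
    (hinj : InjOn E (Iio omega1)) (h : DisjointSeq n a) : DisjointSeq n fun ξ => a (E ξ) :=
  fun _ hξ _ hδ hne => h _ (hmaps hξ) _ (hmaps hδ) (hinj.ne hξ hδ hne)

theorem RealizesType.of_comp (hmaps : MapsTo E (Iio omega1) (Iio omega1)) {g : ℕ → Bool}
    (h : RealizesType n (fun ξ => a (E ξ)) g) : RealizesType n a g := by
  obtain ⟨ξ, hξ, δ, hδ, hg⟩ := h
  exact ⟨E ξ, hmaps hξ, E δ, hmaps hδ, hg⟩

end Reindex

theorem Entangled.weaklyEntangled {L : Type*} [LinearOrder L] {n : ℕ} (h : Entangled L n) :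
    WeaklyEntangled L n :=
  fun a hinc hdisj _ => h a hinc hdisj

theorem WeaklyEntangled.entangled {L : Type*} [LinearOrder L] [DenselyOrdered L] {n : ℕ}
    (hsep : SeparableOrder L) (h : WeaklyEntangled L n) : Entangled L n := by
  intro a hinc hdisj g
  obtain ⟨D, hDc, hD⟩ := hsep.exists_countable_forall_between
  have := hDc.to_subtype
  have hseparators : ∀ ξ < omega1, ∃ y : Fin (n - 1) → D,
      ∀ i : Fin (n - 1), a ξ i < y i ∧ (y i : L) < a ξ (i + 1) := fun ξ hξ => by
    choose y hyD hy using fun i : Fin (n - 1) =>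
      hD _ _ (hinc ξ hξ i (i + 1) (by omega) (by omega))
    exact ⟨fun i => ⟨y i, hyD i⟩, hy⟩
  obtain ⟨y, E, hmaps, hinj, hy⟩ := exists_injOn_Iio_omega1_of_countable hseparators
  have hsepE : SeparatedSeq n fun ξ => a (E ξ) :=
    ⟨fun i => if hi : i + 1 < n then y ⟨i, by omega⟩ else a 0 0, fun ξ hξ i hi => by
      simpa only [dif_pos hi] using hy ξ hξ ⟨i, by omega⟩⟩
  exact (h _ (fun ξ hξ => hinc _ (hmaps hξ)) (hdisj.comp hmaps hinj) hsepE g).of_comp hmaps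

theorem stmt7_general (n : ℕ) (L : Type*) [LinearOrder L] [DenselyOrdered L]
    (hsep : SeparableOrder L) :
    Entangled L n ↔ WeaklyEntangled L n :=
  ⟨Entangled.weaklyEntangled, WeaklyEntangled.entangled hsep⟩

/-- for `2 ≤ n`, a dense separable linear order is `n`-entangled iff it
is weakly `n`-entangled. -/
theorem stmt7 (n : ℕ) (hn : 2 ≤ n) (L : Type*) [LinearOrder L] [DenselyOrdered L]
    (hsep : SeparableOrder L) :
    Entangled L n ↔ WeaklyEntangled L n :=
  stmt7_general n L hsep
end
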